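/- Optimality is equivalent to maximizing the correct-classification mass: suppose each tie set 𝓔_j has Lebesgue measure zero. Then for every family of measurable sets D_1,…,D_n ⊆ Ω forming an admissible partition, Σ_{j=1}^n q_j ∫_{D_j} P_j(r) dr ≤ Σ_{j=1}^n q_j ∫_{D_j*} P_j(r) dr. -/

import Mathlib

/-!
Let `M = maxᵢ qᵢ Pᵢ`. Any admissible partition collects at most `∫_Ω M`, since `qⱼ Pⱼ ≤ M`
on `Dⱼ` and the overlaps `Dⱼ ∩ Dₖ` carry no `M`-mass because `M ≤ Σₗ qₗ Pₗ`. The optimal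
domains collect exactly `∫_Ω M`: on `Dⱼ*` the maximum is `qⱼ Pⱼ`, and the `Dⱼ*` cover `Ω` up
to the tie sets, which are null.
-/

open MeasureTheory Set Function

variable {α ι : Type*}

def strictArgmaxSet {β : Type*} [LinearOrder β] (Ω : Set α) (f : ι → α → β) (j : ι) : Set α :=
  {x | x ∈ Ω ∧ ∀ k, k ≠ j → f k x < f j x}

def tieSet {β : Type*} [LinearOrder β] (Ω : Set α) (f : ι → α → β) (j : ι) : Set α :=
  ⋃ (k : ι) (_ : k ≠ j), {x | x ∈ Ω ∧ f k x = f j x ∧ ∀ i, f i x ≤ f j x}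

section Sets

variable {β : Type*} [LinearOrder β] {Ω : Set α} {f : ι → α → β}

theorem strictArgmaxSet_subset (j : ι) : strictArgmaxSet Ω f j ⊆ Ω := fun _ hx => hx.1

theorem pairwise_disjoint_strictArgmaxSet : Pairwise (Disjoint on strictArgmaxSet Ω f) :=
  fun i j hij => disjoint_left.2 fun _ hi hj => lt_asymm (hi.2 j hij.symm) (hj.2 i hij)

theorem diff_iUnion_strictArgmaxSet_subset_iUnion_tieSet [Finite ι] [Nonempty ι] :
    Ω \ ⋃ j, strictArgmaxSet Ω f j ⊆ ⋃ j, tieSet Ω f j := by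
  rintro x ⟨hxΩ, hx⟩
  obtain ⟨j, hj⟩ := Finite.exists_max fun i => f i x
  have hxj : x ∉ strictArgmaxSet Ω f j := fun h => hx (mem_iUnion_of_mem j h)
  simp only [strictArgmaxSet, mem_ofPred_eq, not_and, not_forall, not_lt] at hxj
  obtain ⟨k, hkj, hk⟩ := hxj hxΩ
  exact mem_iUnion_of_mem j <| mem_biUnion hkj ⟨hxΩ, le_antisymm (hj k) hk, hj⟩

end Sets

section Real

variable {f : ι → α → ℝ}

theorem iSup_eq_of_mem_strictArgmaxSet [Finite ι] {Ω : Set α} {j : ι} {x : α}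
    (hx : x ∈ strictArgmaxSet Ω f j) : ⨆ i, f i x = f j x := by
  have : Nonempty ι := ⟨j⟩
  refine le_antisymm (ciSup_le fun i => ?_)
    (le_ciSup (f := fun i => f i x) (Finite.bddAbove_range _) j)
  rcases eq_or_ne i j with rfl | hij
  · exact le_rfl
  · exact (hx.2 i hij).le

theorem iSup_le_sum_of_nonneg [Fintype ι] {g : ι → ℝ} (hg : ∀ i, 0 ≤ g i) :
    ⨆ i, g i ≤ ∑ i, g i :=
  Real.iSup_le (fun i => Finset.single_le_sum (fun j _ => hg j) (Finset.mem_univ i))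
    (Finset.sum_nonneg fun j _ => hg j)

variable [MeasurableSpace α] {μ : Measure α}

theorem measurableSet_strictArgmaxSet [Countable ι] {Ω : Set α} (hΩ : MeasurableSet Ω)
    (hf : ∀ i, Measurable (f i)) (j : ι) : MeasurableSet (strictArgmaxSet Ω f j) := by
  simp only [strictArgmaxSet, ofPred_and, ofPred_mem_eq, ofPred_forall]
  exact hΩ.inter <| .iInter fun k => .iInter fun _ => measurableSet_lt (hf k) (hf j)

theorem integrableOn_iSup [Fintype ι] {s : Set α} (hf : ∀ i, Measurable (f i))
    (hf₀ : ∀ i x, 0 ≤ f i x) (hfi : ∀ i, IntegrableOn (f i) s μ) :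
    IntegrableOn (fun x => ⨆ i, f i x) s μ := by
  refine (integrable_finsetSum Finset.univ fun i _ => hfi i).mono'
    (Measurable.iSup hf).aestronglyMeasurable (ae_of_all _ fun x => ?_)
  rw [Real.norm_of_nonneg (Real.iSup_nonneg fun i => hf₀ i x)]
  exact iSup_le_sum_of_nonneg fun i => hf₀ i x

theorem setIntegral_iUnion_of_setIntegral_inter_eq_zero [Fintype ι] {s : ι → Set α} {g : α → ℝ}
    (hs : ∀ i, MeasurableSet (s i)) (hg : ∀ x, 0 ≤ g x) (hgi : IntegrableOn g (⋃ i, s i) μ)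
    (hd : Pairwise fun i j => ∫ x in s i ∩ s j, g x ∂μ = 0) :
    ∫ x in ⋃ i, s i, g x ∂μ = ∑ i, ∫ x in s i, g x ∂μ := by
  -- Restricted to the support of `g`, the family becomes a.e.-disjoint.
  have restrict_support : ∀ t, MeasurableSet t →
      ∫ x in t, g x ∂(μ.restrict (support g)) = ∫ x in t, g x ∂μ := fun t ht => by
    rw [Measure.restrict_comm ht, setIntegral_support]
  have hdisj : Pairwise (AEDisjoint (μ.restrict (support g)) on s) := fun i j hij => by
    have hgij : IntegrableOn g (s i ∩ s j) μ :=
      hgi.mono_set (inter_subset_left.trans (subset_iUnion s i))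
    have hnot_pos := (setIntegral_pos_iff_support_of_nonneg_ae (ae_of_all _ hg) hgij).not
    rw [hd hij] at hnot_pos
    simpa [AEDisjoint, Measure.restrict_apply ((hs i).inter (hs j)), inter_comm] using hnot_pos
  rw [← restrict_support _ (MeasurableSet.iUnion hs),
    integral_iUnion_ae (fun i => (hs i).nullMeasurableSet) hdisj
      (hgi.mono_measure Measure.restrict_le_self), tsum_fintype]
  exact Finset.sum_congr rfl fun i _ => restrict_support _ (hs i)

theorem sum_setIntegral_le_setIntegral_iSup [Fintype ι] {Ω : Set α} {D : ι → Set α}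
    (hf : ∀ i, Measurable (f i)) (hf₀ : ∀ i x, 0 ≤ f i x) (hfi : ∀ i, IntegrableOn (f i) Ω μ)
    (hD : ∀ j, MeasurableSet (D j)) (hDΩ : ∀ j, D j ⊆ Ω)
    (hoverlap : Pairwise fun j k => ∀ ℓ, ∫ x in D j ∩ D k, f ℓ x ∂μ = 0) :
    ∑ j, ∫ x in D j, f j x ∂μ ≤ ∫ x in Ω, ⨆ i, f i x ∂μ := by
  have hM₀ : ∀ x, 0 ≤ ⨆ i, f i x := fun x => Real.iSup_nonneg fun i => hf₀ i x
  have hMi := integrableOn_iSup hf hf₀ hfi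
  have hM_overlap : Pairwise fun j k => ∫ x in D j ∩ D k, ⨆ i, f i x ∂μ = 0 := by
    intro j k hjk
    have hsub : D j ∩ D k ⊆ Ω := inter_subset_left.trans (hDΩ j)
    refine le_antisymm ?_ (integral_nonneg hM₀)
    calc ∫ x in D j ∩ D k, ⨆ i, f i x ∂μ
        ≤ ∫ x in D j ∩ D k, ∑ ℓ, f ℓ x ∂μ :=
          setIntegral_mono (hMi.mono_set hsub)
            (integrable_finsetSum _ fun ℓ _ => (hfi ℓ).mono_set hsub)
            fun x => iSup_le_sum_of_nonneg fun i => hf₀ i x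
      _ = 0 := by
          rw [integral_finsetSum _ fun ℓ _ => (hfi ℓ).mono_set hsub]
          exact Finset.sum_eq_zero fun ℓ _ => hoverlap hjk ℓ
  calc ∑ j, ∫ x in D j, f j x ∂μ
      ≤ ∑ j, ∫ x in D j, ⨆ i, f i x ∂μ :=
        Finset.sum_le_sum fun j _ => setIntegral_mono ((hfi j).mono_set (hDΩ j))
          (hMi.mono_set (hDΩ j)) fun x =>
            le_ciSup (f := fun i => f i x) (Finite.bddAbove_range _) j
    _ = ∫ x in ⋃ j, D j, ⨆ i, f i x ∂μ :=
        (setIntegral_iUnion_of_setIntegral_inter_eq_zero hD hM₀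
          (hMi.mono_set (iUnion_subset hDΩ)) hM_overlap).symm
    _ ≤ ∫ x in Ω, ⨆ i, f i x ∂μ :=
        setIntegral_mono_set hMi (ae_of_all _ hM₀) (iUnion_subset hDΩ).eventuallyLE

theorem setIntegral_iSup_eq_sum_strictArgmaxSet [Fintype ι] [Nonempty ι] {Ω : Set α}
    (hΩ : MeasurableSet Ω) (hf : ∀ i, Measurable (f i))
    (hMi : IntegrableOn (fun x => ⨆ i, f i x) Ω μ) (htie : ∀ j, μ (tieSet Ω f j) = 0) :
    ∫ x in Ω, ⨆ i, f i x ∂μ = ∑ j, ∫ x in strictArgmaxSet Ω f j, f j x ∂μ := by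
  have hmeas := measurableSet_strictArgmaxSet hΩ hf
  have hΩ_ae : Ω =ᵐ[μ] ⋃ j, strictArgmaxSet Ω f j := by
    refine ae_eq_set.2 ⟨measure_mono_null diff_iUnion_strictArgmaxSet_subset_iUnion_tieSet
      (measure_iUnion_null htie), ?_⟩
    rw [sdiff_eq_empty.2 (iUnion_subset strictArgmaxSet_subset), measure_empty]
  rw [setIntegral_congr_set hΩ_ae, integral_iUnion_fintype hmeas pairwise_disjoint_strictArgmaxSet
    fun j => hMi.mono_set (strictArgmaxSet_subset j)]
  exact Finset.sum_congr rfl fun j _ =>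
    setIntegral_congr_fun (hmeas j) fun x hx => iSup_eq_of_mem_strictArgmaxSet hx

end Real

theorem optimal_domains_maximize_correct_mass_general
    (n m : ℕ)
    (Ω : Set (Fin m → ℝ)) (hΩ : MeasurableSet Ω)
    (P : Fin n → (Fin m → ℝ) → ℝ)
    (hPmeas : ∀ j, Measurable (P j))
    (hPnonneg : ∀ j r, 0 ≤ P j r)
    (hPone : ∀ j, ∫ r in Ω, P j r = 1)
    (q : Fin n → ℝ) (hq : ∀ j, 0 ≤ q j)
    (Dstar : Fin n → Set (Fin m → ℝ))
    (hDstar : ∀ j, Dstar j =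
      {r | r ∈ Ω ∧ ∀ k, k ≠ j → q k * P k r < q j * P j r})
    (E : Fin n → Set (Fin m → ℝ))
    (hE : ∀ j, E j = ⋃ (k : Fin n) (_ : k ≠ j),
      {r | r ∈ Ω ∧ q k * P k r = q j * P j r ∧ ∀ i, q i * P i r ≤ q j * P j r})
    (hEnull : ∀ j, volume (E j) = 0) :
    ∀ D : Fin n → Set (Fin m → ℝ),
      (∀ j, MeasurableSet (D j)) →
      (∀ j, D j ⊆ Ω) →
      (∀ ℓ, ∫ r in ⋃ k, D k, P ℓ r = 1) →
      (∀ j k, j ≠ k → ∀ ℓ, ∫ r in D j ∩ D k, P ℓ r = 0) →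
      ∑ j, q j * ∫ r in D j, P j r ≤ ∑ j, q j * ∫ r in Dstar j, P j r := by
  intro D hD hDΩ _ hoverlap
  rcases isEmpty_or_nonempty (Fin n) with _ | _
  · simp
  set f : Fin n → (Fin m → ℝ) → ℝ := fun i r => q i * P i r
  obtain rfl : Dstar = strictArgmaxSet Ω f := funext hDstar
  obtain rfl : E = tieSet Ω f := funext hE
  have hf : ∀ i, Measurable (f i) := fun i => (hPmeas i).const_mul (q i)
  have hf₀ : ∀ i r, 0 ≤ f i r := fun i r => mul_nonneg (hq i) (hPnonneg i r)
  have hfi : ∀ i, IntegrableOn (f i) Ω := fun i =>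
    (integrable_of_integral_eq_one (hPone i)).const_mul (q i)
  simp only [← integral_const_mul]
  calc _ ≤ ∫ r in Ω, ⨆ i, f i r :=
        sum_setIntegral_le_setIntegral_iSup hf hf₀ hfi hD hDΩ fun j k hjk ℓ => by
          rw [integral_const_mul, hoverlap j k hjk ℓ, mul_zero]
    _ = _ := setIntegral_iSup_eq_sum_strictArgmaxSet hΩ hf (integrableOn_iSup hf hf₀ hfi) hEnull

/-- Optimality is equivalent to maximizing the correct-classification
mass: if each tie set is Lebesgue-null, then for every admissible partition
`Σ_j q_j ∫_{D_j} P_j ≤ Σ_j q_j ∫_{D_j*} P_j`. -/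
theorem optimal_domains_maximize_correct_mass
    (n m : ℕ) (hn : 2 ≤ n) (hm : 1 ≤ m)
    (Ω : Set (Fin m → ℝ)) (hΩ : MeasurableSet Ω)
    (P : Fin n → (Fin m → ℝ) → ℝ)
    (hPmeas : ∀ j, Measurable (P j))
    (hPnonneg : ∀ j r, 0 ≤ P j r)
    (hPsupp : ∀ j r, r ∉ Ω → P j r = 0)
    (hPone : ∀ j, ∫ r in Ω, P j r = 1)
    (q : Fin n → ℝ) (hq : ∀ j, 0 ≤ q j) (hqsum : ∑ j, q j = 1)
    (Dstar : Fin n → Set (Fin m → ℝ))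
    (hDstar : ∀ j, Dstar j =
      {r | r ∈ Ω ∧ ∀ k, k ≠ j → q k * P k r < q j * P j r})
    (E : Fin n → Set (Fin m → ℝ))
    (hE : ∀ j, E j = ⋃ (k : Fin n) (_ : k ≠ j),
      {r | r ∈ Ω ∧ q k * P k r = q j * P j r ∧ ∀ i, q i * P i r ≤ q j * P j r})
    (hEnull : ∀ j, volume (E j) = 0) :
    ∀ D : Fin n → Set (Fin m → ℝ),
      (∀ j, MeasurableSet (D j)) →
      (∀ j, D j ⊆ Ω) →
      (∀ ℓ, ∫ r in ⋃ k, D k, P ℓ r = 1) →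
      (∀ j k, j ≠ k → ∀ ℓ, ∫ r in D j ∩ D k, P ℓ r = 0) →
      ∑ j, q j * ∫ r in D j, P j r ≤ ∑ j, q j * ∫ r in Dstar j, P j r :=
  optimal_domains_maximize_correct_mass_general n m Ω hΩ P hPmeas hPnonneg hPone q hq Dstar hDstar E
    hE hEnull
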